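/- arXiv:1110.5289 — 4 statements merged into one kernel-verified Lean document; each statement's English description precedes it below -/
import Mathlib

section
/- For any nontrivial connected graph G, the partition dimension of G is at most the metric dimension of G plus one, i.e., pd(G) ≤ dim(G) + 1. -/
/-! Given a resolving set `S`, put each vertex of `S` in a class of its own and all remaining
vertices in one further class. The distance from a vertex to the singleton class `{s}` is its
distance to `s`, so the partition representation contains the metric representation with
respect to `S`, and distinct vertices are separated. (If `S = V` the extra class is empty and is
dropped.) -/

open SimpleGraph

variable {V : Type*}

/-- Distance from a vertex to a set of vertices: `min_{u ∈ P} d(v,u)`. -/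
noncomputable def distSet (G : SimpleGraph V) (v : V) (P : Set V) : ℕ :=
  sInf ((G.dist v) '' P)

/-- An ordered partition of `V` into `t` (nonempty) classes, encoded by a surjective
map `c : V → Fin t`, is resolving if distinct vertices have distinct partition
representations, i.e. distinct vectors of distances to the classes. -/
def IsResolvingPartition (G : SimpleGraph V) {t : ℕ} (c : V → Fin t) : Prop :=
  Function.Surjective c ∧
    ∀ u v : V, (∀ i : Fin t, distSet G u {x | c x = i} = distSet G v {x | c x = i}) → u = v

/-- The partition dimension: the least `t` admitting a resolving partition into `t` classes. -/
noncomputable def partitionDim (G : SimpleGraph V) : ℕ :=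
  sInf {t : ℕ | ∃ c : V → Fin t, IsResolvingPartition G c}

/-- A set `S` is a resolving set if distinct vertices have distinct vectors of
distances to the elements of `S`. -/
def IsResolvingSet (G : SimpleGraph V) (S : Set V) : Prop :=
  ∀ u v : V, (∀ w ∈ S, G.dist u w = G.dist v w) → u = v

/-- The metric dimension: the least cardinality of a resolving set. -/
noncomputable def metricDim (G : SimpleGraph V) : ℕ :=
  sInf {k : ℕ | ∃ S : Set V, S.ncard = k ∧ IsResolvingSet G S}

/-- A leaf is a vertex of degree one. -/
def IsLeaf (G : SimpleGraph V) (v : V) : Prop := (G.neighborSet v).ncard = 1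

/-- A major vertex is a vertex of degree at least three. -/
def IsMajor (G : SimpleGraph V) (v : V) : Prop := 3 ≤ (G.neighborSet v).ncard

/-- A path graph: a tree in which every vertex has degree at most two. -/
def IsPathGraph (G : SimpleGraph V) : Prop :=
  G.IsTree ∧ ∀ v : V, (G.neighborSet v).ncard ≤ 2

/-- `u` is a terminal vertex of the major vertex `v` if `u` is a leaf and
`d(u,v) < d(u,w)` for every other major vertex `w`. -/
def IsTerminalOf (G : SimpleGraph V) (u v : V) : Prop :=
  IsLeaf G u ∧ IsMajor G v ∧ ∀ w : V, IsMajor G w → w ≠ v → G.dist u v < G.dist u w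

/-- The terminal degree of a vertex: its number of terminal vertices. -/
noncomputable def terminalDegree (G : SimpleGraph V) (v : V) : ℕ :=
  {u | IsTerminalOf G u v}.ncard

/-- An exterior major vertex: a major vertex with positive terminal degree. -/
def IsExteriorMajor (G : SimpleGraph V) (v : V) : Prop :=
  IsMajor G v ∧ 0 < terminalDegree G v

/-- `n₁(G)`: the number of leaves. -/
noncomputable def numLeaves (G : SimpleGraph V) : ℕ := {v | IsLeaf G v}.ncard

/-- `ex(G)`: the number of exterior major vertices. -/
noncomputable def numExteriorMajor (G : SimpleGraph V) : ℕ := {v | IsExteriorMajor G v}.ncard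

/-- A support vertex: a vertex adjacent to a leaf. -/
def IsSupport (G : SimpleGraph V) (v : V) : Prop := ∃ u, G.Adj v u ∧ IsLeaf G u

/-- `ξ(G)`: the number of support vertices. -/
noncomputable def numSupport (G : SimpleGraph V) : ℕ := {v | IsSupport G v}.ncard

/-- `θ(G)`: the maximum number of leaves adjacent to a single support vertex. -/
noncomputable def maxLeavesAtSupport (G : SimpleGraph V) : ℕ :=
  sSup {n : ℕ | ∃ v, IsSupport G v ∧ n = {u | G.Adj v u ∧ IsLeaf G u}.ncard}

variable (G : SimpleGraph V)

lemma distSet_singleton (v s : V) : distSet G v {s} = G.dist v s := by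
  simp [distSet]

/-- Relabelling the range of `c` discards its empty classes, which separate no vertices. -/
lemma partitionDim_le_card {ι : Type*} [Finite ι] (c : V → ι)
    (hc : ∀ u v : V, (∀ i, distSet G u {x | c x = i} = distSet G v {x | c x = i}) → u = v) :
    partitionDim G ≤ Nat.card ι := by
  let e : Set.range c ≃ Fin (Nat.card (Set.range c)) := Finite.equivFin _
  let c' : V → Fin (Nat.card (Set.range c)) := fun v => e ⟨c v, v, rfl⟩
  have hclass (i : Set.range c) : {x | c' x = e i} = {x | c x = i} := by
    ext x
    simp only [Set.mem_ofPred_eq, c', e.apply_eq_iff_eq, Subtype.ext_iff]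
  have hres : IsResolvingPartition G c' := by
    refine ⟨fun j => ?_, fun u v h => hc u v fun i => ?_⟩
    · obtain ⟨v, hv⟩ := (e.symm j).2
      exact ⟨v, e.eq_symm_apply.mp (Subtype.ext hv)⟩
    · by_cases hi : i ∈ Set.range c
      · simpa only [hclass] using h (e ⟨i, hi⟩)
      · have hempty : {x | c x = i} = ∅ :=
          Set.eq_empty_of_forall_notMem fun x hx => hi ⟨x, hx⟩
        simp only [hempty, distSet, Set.image_empty]
  calc partitionDim G ≤ Nat.card (Set.range c) := Nat.sInf_le ⟨c', hres⟩
    _ ≤ Nat.card ι := Finite.card_subtype_le _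

lemma partitionDim_le_ncard_add_one {S : Set V} (hS : S.Finite) (hres : IsResolvingSet G S) :
    partitionDim G ≤ S.ncard + 1 := by
  classical
  have := hS.to_subtype
  let c : V → Option S := fun v => if h : v ∈ S then some ⟨v, h⟩ else none
  have hclass (s : S) : {x | c x = some s} = {s.1} := by
    ext x
    by_cases hx : x ∈ S
    · simp [c, hx, Subtype.ext_iff]
    · grind
  calc partitionDim G ≤ Nat.card (Option S) :=
        partitionDim_le_card G c fun u v h =>
          hres u v fun s hs => by simpa only [hclass, distSet_singleton] using h (some ⟨s, hs⟩)
    _ = S.ncard + 1 := by rw [Finite.card_option, Nat.card_coe_set_eq]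

lemma isResolvingSet_univ (hG : G.Connected) : IsResolvingSet G Set.univ := fun u _ h =>
  (hG.dist_eq_zero_iff.mp ((h u (Set.mem_univ u)).symm.trans (G.dist_self))).symm

lemma exists_isResolvingSet_ncard_eq_metricDim (hG : G.Connected) :
    ∃ S : Set V, S.ncard = metricDim G ∧ IsResolvingSet G S :=
  Nat.sInf_mem (s := {k | ∃ S : Set V, S.ncard = k ∧ IsResolvingSet G S})
    ⟨_, Set.univ, rfl, isResolvingSet_univ G hG⟩

theorem partitionDim_le_metricDim_add_one_general {V : Type*} [Fintype V] (G : SimpleGraph V)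
    (hG : G.Connected) :
    partitionDim G ≤ metricDim G + 1 := by
  obtain ⟨S, hcard, hres⟩ := exists_isResolvingSet_ncard_eq_metricDim G hG
  simpa only [hcard] using partitionDim_le_ncard_add_one G S.toFinite hres

/-- For any nontrivial connected graph `G`, `pd(G) ≤ dim(G) + 1`. -/
theorem partitionDim_le_metricDim_add_one {V : Type*} [Fintype V] (G : SimpleGraph V)
    (hG : G.Connected) (hV : 2 ≤ Fintype.card V) :
    partitionDim G ≤ metricDim G + 1 :=
  partitionDim_le_metricDim_add_one_general G hG
end

section
/- A connected graph G with at least 2 vertices has partition dimension pd(G) = 2 if and only if G is a path graph. -/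
open SimpleGraph

variable {V : Type*}

/-!
A resolving bipartition `{A, Aᶜ}` unfolds the graph onto the integer line: `v ↦ d(v, Aᶜ)` on `A`
and `v ↦ 1 - d(v, A)` off `A` is injective (one coordinate of each representation vanishes) and
moves by exactly one along every edge, so it embeds `G` into `hasse ℤ`, which is acyclic of
maximum degree two. Conversely, in a path the distances to a leaf `u` are pairwise distinct, so
`{{u}, V \ {u}}` is resolving, while a single class never resolves two vertices.
-/

namespace SimpleGraph

variable {G : SimpleGraph V} {P A : Set V} {u v a b : V}

lemma distSet_le_dist (hu : u ∈ P) : distSet G v P ≤ G.dist v u :=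
  Nat.sInf_le ⟨u, hu, rfl⟩

lemma exists_distSet_eq (v : V) (hP : P.Nonempty) : ∃ u ∈ P, distSet G v P = G.dist v u := by
  obtain ⟨u, hu, h⟩ := Nat.sInf_mem (hP.image (G.dist v))
  exact ⟨u, hu, h.symm⟩

lemma distSet_singleton : distSet G v {u} = G.dist v u := by
  rw [distSet, Set.image_singleton, csInf_singleton]

lemma distSet_eq_zero_of_mem (hv : v ∈ P) : distSet G v P = 0 :=
  Nat.eq_zero_of_le_zero <| (distSet_le_dist hv).trans_eq dist_self

lemma Connected.distSet_pos (hG : G.Connected) (hP : P.Nonempty) (hv : v ∉ P) :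
    0 < distSet G v P := by
  obtain ⟨u, hu, h⟩ := exists_distSet_eq (G := G) v hP
  rw [h, Nat.pos_iff_ne_zero, ne_eq, hG.dist_eq_zero_iff]
  exact fun hvu => hv (hvu ▸ hu)

lemma Connected.distSet_le_distSet_add_one (hG : G.Connected) (hP : P.Nonempty) (hab : G.Adj a b) :
    distSet G a P ≤ distSet G b P + 1 := by
  obtain ⟨u, hu, h⟩ := exists_distSet_eq (G := G) b hP
  calc distSet G a P ≤ G.dist a u := distSet_le_dist hu
    _ ≤ G.dist a b + G.dist b u := hG.dist_triangle
    _ = distSet G b P + 1 := by rw [dist_eq_one_iff_adj.2 hab, h, add_comm]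

lemma Connected.distSet_eq_one (hG : G.Connected) (hP : P.Nonempty) (ha : a ∉ P) (hb : b ∈ P)
    (hab : G.Adj a b) : distSet G a P = 1 :=
  le_antisymm ((distSet_le_dist hb).trans_eq (dist_eq_one_iff_adj.2 hab)) (hG.distSet_pos hP ha)

lemma hasse_int_adj {m n : ℤ} : (hasse ℤ).Adj m n ↔ |m - n| = 1 := by
  rw [hasse_adj, Order.covBy_iff_add_one_eq, Order.covBy_iff_add_one_eq, abs_eq one_pos.le]
  omega

lemma hasse_int_neighborSet (n : ℤ) : (hasse ℤ).neighborSet n = {n - 1, n + 1} := by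
  ext m
  rw [mem_neighborSet, hasse_int_adj, abs_eq one_pos.le]
  simp only [Set.mem_insert_iff, Set.mem_singleton_iff]
  omega

lemma isAcyclic_hasse_int : (hasse ℤ).IsAcyclic := by
  intro u c hc
  obtain ⟨m, hm, hmax⟩ := c.support.toFinset.exists_max_image id ⟨u, by simp⟩
  rw [List.mem_toFinset] at hm
  -- at a highest vertex `m` of the cycle, both cycle-neighbours would have to be `m - 1`
  have hsub : c.toSubgraph.neighborSet m ⊆ {m - 1} := by
    intro n hn
    have hnc : n ∈ c.support := c.mem_verts_toSubgraph.1 (Subgraph.Adj.snd_mem hn)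
    have hle : n ≤ m := hmax n (List.mem_toFinset.2 hnc)
    have hadj := hasse_int_adj.1 (Subgraph.adj_sub _ hn)
    rw [abs_eq one_pos.le] at hadj
    rw [Set.mem_singleton_iff]
    omega
  have := Set.ncard_le_ncard hsub
  rw [hc.ncard_neighborSet_toSubgraph_eq_two hm, Set.ncard_singleton] at this
  omega

lemma ncard_neighborSet_le_two_of_hom (φ : G →g hasse ℤ) (hφ : Function.Injective φ) (v : V) :
    (G.neighborSet v).ncard ≤ 2 :=
  calc (G.neighborSet v).ncard ≤ ((hasse ℤ).neighborSet (φ v)).ncard :=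
        Set.ncard_le_ncard_of_injOn φ (fun _ => φ.map_adj) hφ.injOn
          (by rw [hasse_int_neighborSet]; exact Set.toFinite _)
    _ = 2 := by rw [hasse_int_neighborSet, Set.ncard_pair (by omega)]

lemma isPathGraph_of_injective_of_abs_sub_le_one (hG : G.Connected) (f : V → ℤ)
    (hf : Function.Injective f) (hadj : ∀ a b, G.Adj a b → |f a - f b| ≤ 1) : IsPathGraph G := by
  let φ : G →g hasse ℤ :=
    ⟨f, fun {a b} hab => hasse_int_adj.2 <| le_antisymm (hadj a b hab)
      (Int.one_le_abs (sub_ne_zero.2 (hf.ne hab.ne)))⟩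
  exact ⟨⟨hG, isAcyclic_hasse_int.comap φ hf⟩, ncard_neighborSet_le_two_of_hom φ hf⟩

open Classical in
noncomputable def signedDist (G : SimpleGraph V) (A : Set V) (v : V) : ℤ :=
  if v ∈ A then (distSet G v Aᶜ : ℤ) else 1 - distSet G v A

lemma signedDist_of_mem (hv : v ∈ A) : signedDist G A v = distSet G v Aᶜ := by
  classical exact if_pos hv

lemma signedDist_of_notMem (hv : v ∉ A) : signedDist G A v = 1 - distSet G v A := by
  classical exact if_neg hv

lemma Connected.signedDist_pos_iff (hG : G.Connected) (hA : A.Nonempty) (hAc : Aᶜ.Nonempty) :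
    0 < signedDist G A v ↔ v ∈ A := by
  by_cases hv : v ∈ A
  · have := hG.distSet_pos hAc (Set.notMem_compl_iff.2 hv)
    exact iff_of_true (by rw [signedDist_of_mem hv]; omega) hv
  · have := hG.distSet_pos hA hv
    exact iff_of_false (by rw [signedDist_of_notMem hv]; omega) hv

lemma Connected.signedDist_injective (hG : G.Connected) (hA : A.Nonempty) (hAc : Aᶜ.Nonempty)
    (hres : ∀ u v, distSet G u A = distSet G v A → distSet G u Aᶜ = distSet G v Aᶜ → u = v) :
    Function.Injective (signedDist G A) := by
  intro u v huv
  have hside : u ∈ A ↔ v ∈ A := by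
    rw [← hG.signedDist_pos_iff hA hAc, ← hG.signedDist_pos_iff hA hAc, huv]
  by_cases hu : u ∈ A
  · have hv := hside.1 hu
    rw [signedDist_of_mem hu, signedDist_of_mem hv] at huv
    refine hres u v ?_ (by exact_mod_cast huv)
    rw [distSet_eq_zero_of_mem hu, distSet_eq_zero_of_mem hv]
  · have hv := mt hside.2 hu
    rw [signedDist_of_notMem hu, signedDist_of_notMem hv] at huv
    refine hres u v (by omega) ?_
    rw [distSet_eq_zero_of_mem (Set.mem_compl hu), distSet_eq_zero_of_mem (Set.mem_compl hv)]

lemma Connected.abs_signedDist_sub_le_one (hG : G.Connected) (hA : A.Nonempty)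
    (hAc : Aᶜ.Nonempty) (hab : G.Adj a b) :
    |signedDist G A a - signedDist G A b| ≤ 1 := by
  rw [abs_le]
  by_cases ha : a ∈ A <;> by_cases hb : b ∈ A
  · have := hG.distSet_le_distSet_add_one hAc hab
    have := hG.distSet_le_distSet_add_one hAc hab.symm
    rw [signedDist_of_mem ha, signedDist_of_mem hb]
    omega
  · rw [signedDist_of_mem ha, signedDist_of_notMem hb,
      hG.distSet_eq_one hAc (Set.notMem_compl_iff.2 ha) (Set.mem_compl hb) hab,
      hG.distSet_eq_one hA hb ha hab.symm]
    norm_num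
  · rw [signedDist_of_notMem ha, signedDist_of_mem hb,
      hG.distSet_eq_one hA ha hb hab,
      hG.distSet_eq_one hAc (Set.notMem_compl_iff.2 hb) (Set.mem_compl ha) hab.symm]
    norm_num
  · have := hG.distSet_le_distSet_add_one hA hab
    have := hG.distSet_le_distSet_add_one hA hab.symm
    rw [signedDist_of_notMem ha, signedDist_of_notMem hb]
    omega

lemma IsResolvingPartition.isPathGraph (hG : G.Connected) {c : V → Fin 2}
    (hc : IsResolvingPartition G c) : IsPathGraph G := by
  set A := {x | c x = 0}
  have hcompl : {x | c x = 1} = Aᶜ := by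
    ext x
    show c x = 1 ↔ ¬c x = 0
    omega
  have hA : A.Nonempty := hc.1 0
  have hAc : Aᶜ.Nonempty := hcompl ▸ hc.1 1
  have hres : ∀ u v, distSet G u A = distSet G v A → distSet G u Aᶜ = distSet G v Aᶜ → u = v := by
    intro u v h0 h1
    refine hc.2 u v fun i => ?_
    fin_cases i
    · exact h0
    · simpa [hcompl] using h1
  exact isPathGraph_of_injective_of_abs_sub_le_one hG (signedDist G A)
    (hG.signedDist_injective hA hAc hres) fun _ _ => hG.abs_signedDist_sub_le_one hA hAc

lemma Connected.exists_adj_dist_eq (hG : G.Connected) {k : ℕ}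
    (h : G.dist v u = k + 1) : ∃ w, G.Adj v w ∧ G.dist w u = k := by
  obtain ⟨p, hp⟩ := hG.exists_walk_length_eq_dist v u
  cases p with
  | nil => simp at h
  | @cons _ w _ hvw q =>
    refine ⟨w, hvw, le_antisymm ?_ ?_⟩
    · have := dist_le q
      simp only [Walk.length_cons] at hp
      omega
    · have : G.dist v u ≤ G.dist v w + G.dist w u := hG.dist_triangle
      rw [dist_eq_one_iff_adj.2 hvw] at this
      omega

lemma eq_of_adj_of_ncard_neighborSet_le_two [Finite V] {x c : V}
    (hx : (G.neighborSet x).ncard ≤ 2) (ha : G.Adj x a) (hb : G.Adj x b) (hc : G.Adj x c)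
    (hac : a ≠ c) (hbc : b ≠ c) : a = b := by
  by_contra hab
  have hsub : ({a, b, c} : Set V) ⊆ G.neighborSet x := by
    rintro y (rfl | rfl | rfl) <;> assumption
  have := Set.ncard_le_ncard hsub
  rw [Set.ncard_eq_three.2 ⟨a, b, c, hab, hac, hbc, rfl⟩] at this
  omega

/-- In a connected graph of maximum degree two, the vertices at distance `k + 1` from a leaf `u`
hang off the unique vertex at distance `k`, which has at most one neighbour farther out. -/
lemma Connected.injective_dist_of_ncard_neighborSet_eq_one [Finite V] (hG : G.Connected)
    (hdeg : ∀ v, (G.neighborSet v).ncard ≤ 2) (hu : (G.neighborSet u).ncard = 1) :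
    Function.Injective (G.dist · u) := by
  suffices h : ∀ k v w, G.dist v u = k → G.dist w u = k → v = w from
    fun v w hvw => h _ v w rfl hvw.symm
  intro k
  induction k with
  | zero => intro v w hv hw; rw [hG.dist_eq_zero_iff.1 hv, hG.dist_eq_zero_iff.1 hw]
  | succ k ih =>
    intro v w hv hw
    obtain ⟨v', hvv', hv'⟩ := hG.exists_adj_dist_eq hv
    obtain ⟨w', hww', hw'⟩ := hG.exists_adj_dist_eq hw
    obtain rfl := ih v' w' hv' hw'
    cases k with
    | zero =>
      obtain rfl := hG.dist_eq_zero_iff.1 hv'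
      obtain ⟨x, hx⟩ := Set.ncard_eq_one.1 hu
      have hvx : v ∈ G.neighborSet v' := hvv'.symm
      have hwx : w ∈ G.neighborSet v' := hww'.symm
      rw [hx] at hvx hwx
      exact hvx.trans hwx.symm
    | succ k =>
      obtain ⟨x, hv'x, hx⟩ := hG.exists_adj_dist_eq hv'
      exact eq_of_adj_of_ncard_neighborSet_le_two (hdeg v') hvv'.symm hww'.symm hv'x
        (by rintro rfl; omega) (by rintro rfl; omega)

lemma isResolvingPartition_of_injective_dist [Nontrivial V] [DecidableEq V]
    (hu : Function.Injective (G.dist · u)) :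
    IsResolvingPartition G (fun v => if v = u then (0 : Fin 2) else 1) := by
  refine ⟨fun i => ?_, fun a b h => hu ?_⟩
  · fin_cases i
    · exact ⟨u, if_pos rfl⟩
    · obtain ⟨w, hw⟩ := exists_ne u
      exact ⟨w, if_neg hw⟩
  · have hclass : {x | (if x = u then (0 : Fin 2) else 1) = 0} = {u} := by
      ext x
      by_cases hx : x = u <;> simp [hx]
    simpa only [hclass, distSet_singleton] using h 0

lemma IsTree.exists_ncard_neighborSet_eq_one [Finite V] [Nontrivial V] (hG : G.IsTree) :
    ∃ u, (G.neighborSet u).ncard = 1 := by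
  classical
  have := Fintype.ofFinite V
  obtain ⟨u, hu⟩ := hG.exists_vert_degree_one_of_nontrivial
  exact ⟨u, by rw [Set.ncard_eq_toFinset_card', Set.toFinset_card, card_neighborSet_eq_degree, hu]⟩

lemma IsPathGraph.exists_isResolvingPartition [Finite V] [Nontrivial V] (hP : IsPathGraph G) :
    ∃ c : V → Fin 2, IsResolvingPartition G c := by
  classical
  obtain ⟨u, hu⟩ := hP.1.exists_ncard_neighborSet_eq_one
  exact ⟨_, isResolvingPartition_of_injective_dist
    (hP.1.connected.injective_dist_of_ncard_neighborSet_eq_one hP.2 hu)⟩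

lemma two_le_of_isResolvingPartition [Nontrivial V] {t : ℕ} {c : V → Fin t}
    (hc : IsResolvingPartition G c) : 2 ≤ t := by
  obtain ⟨a, b, hab⟩ := exists_pair_ne V
  match t, c with
  | 0, c => exact (c a).elim0
  | 1, c =>
    refine absurd (hc.2 a b fun i => ?_) hab
    have hclass : {x | c x = i} = Set.univ := Set.eq_univ_of_forall fun x => Subsingleton.elim _ _
    rw [hclass, distSet_eq_zero_of_mem (Set.mem_univ a), distSet_eq_zero_of_mem (Set.mem_univ b)]
  | _ + 2, _ => omega

lemma partitionDim_eq_two_iff [Nontrivial V] :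
    partitionDim G = 2 ↔ ∃ c : V → Fin 2, IsResolvingPartition G c := by
  refine ⟨fun h => ?_, fun ⟨c, hc⟩ => ?_⟩
  · have hne : {t | ∃ c : V → Fin t, IsResolvingPartition G c}.Nonempty :=
      Nat.nonempty_of_sInf_eq_succ h
    exact h ▸ Nat.sInf_mem hne
  · exact le_antisymm (Nat.sInf_le ⟨c, hc⟩)
      (le_csInf ⟨2, c, hc⟩ fun _ ⟨_, h⟩ => two_le_of_isResolvingPartition h)

end SimpleGraph

/-- A connected graph with at least two vertices has partition dimension two
iff it is a path graph. -/
theorem partitionDim_eq_two_iff_isPathGraph {V : Type*} [Fintype V] (G : SimpleGraph V)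
    (hG : G.Connected) (hV : 2 ≤ Fintype.card V) :
    partitionDim G = 2 ↔ IsPathGraph G := by
  have : Nontrivial V := Fintype.one_lt_card_iff_nontrivial.1 hV
  rw [partitionDim_eq_two_iff]
  exact ⟨fun ⟨_, hc⟩ => hc.isPathGraph hG, IsPathGraph.exists_isResolvingPartition⟩
end

section
/- If T is a finite tree that is not a path, then the metric dimension of T equals the number of leaves of T minus the number of exterior major vertices of T, i.e., dim(T) = n₁(T) − ex(T). -/
open SimpleGraph

variable {V : Type*}

/-!
Every leaf `l` of a tree that is not a path is a terminal vertex of exactly one major vertex, its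
anchor, and the legs (the geodesics from the leaves to their anchors, anchors excluded) are
pairwise disjoint. A resolving set meets all but at most one of the legs at each exterior major
vertex: the neighbours of the anchor on two missed legs have the same distances to every vertex
outside these legs. Hence `dim(T) ≥ n₁(T) - ex(T)`.

Conversely, let `S` consist of all leaves but one terminal vertex of each exterior major vertex.
If `a ≠ b` have the same distances to `S`, every vertex of `S` lies behind the midpoint `c` of
`a` and `b`, outside the two branches at `c` containing `a` and `b`. But these two branches always
contain two terminal vertices of a common major vertex (an outermost major vertex inside one of
the branches, or `c` itself), and one of them is in `S`.
-/

namespace SimpleGraph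

variable {G : SimpleGraph V} {a b c l l' l₁ l₂ m s u v w x y z α β : V}

def Between (G : SimpleGraph V) (x y z : V) : Prop :=
  G.dist x y + G.dist y z = G.dist x z

lemma between_self_left (G : SimpleGraph V) (x z : V) : G.Between x x z := by
  simp [Between]

lemma between_self_right (G : SimpleGraph V) (x z : V) : G.Between x z z := by
  simp [Between]

lemma Between.symm (h : G.Between x y z) : G.Between z y x := by
  unfold Between at *
  rw [dist_comm (u := z), dist_comm (u := y) (v := x), dist_comm (u := z)]
  omega

lemma Adj.not_between (h : G.Adj x y) : ¬ G.Between x y x := by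
  simp [Between, dist_eq_one_iff_adj.mpr h]

lemma Between.trans_left (hG : G.Connected) (h₁ : G.Between w y z) (h₂ : G.Between w x y) :
    G.Between w x z := by
  unfold Between at *
  have := hG.dist_triangle (u := x) (v := y) (w := z)
  have := hG.dist_triangle (u := w) (v := x) (w := z)
  omega

lemma Between.trans_left_right (hG : G.Connected) (h₁ : G.Between w y z)
    (h₂ : G.Between w x y) : G.Between x y z := by
  unfold Between at *
  have := hG.dist_triangle (u := x) (v := y) (w := z)
  have := hG.dist_triangle (u := w) (v := x) (w := z)
  omega

lemma Between.trans_right (hG : G.Connected) (h₁ : G.Between w x z) (h₂ : G.Between x y z) :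
    G.Between w y z :=
  (h₁.symm.trans_left hG h₂.symm).symm

lemma IsTree.length_eq_dist (hT : G.IsTree) {p : G.Walk u v} (hp : p.IsPath) :
    p.length = G.dist u v := by
  obtain ⟨q, hq, hql⟩ := hT.connected.exists_path_of_dist u v
  rw [(hT.existsUnique_path u v).unique hp hq, hql]

lemma IsTree.between_of_mem_support (hT : G.IsTree) {p : G.Walk u v} (hp : p.IsPath)
    (hx : x ∈ p.support) : G.Between u x v := by
  classical
  have h₁ := dist_le (p.takeUntil x hx)
  have h₂ := dist_le (p.dropUntil x hx)
  have h₃ := congrArg Walk.length (p.take_spec hx)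
  rw [Walk.length_append, hT.length_eq_dist hp] at h₃
  have := hT.connected.dist_triangle (u := u) (v := x) (w := v)
  unfold Between
  omega

lemma IsTree.mem_support_of_between (hT : G.IsTree) (h : G.Between u x v) {p : G.Walk u v}
    (hp : p.IsPath) : x ∈ p.support := by
  obtain ⟨q₁, -, hq₁⟩ := hT.connected.exists_path_of_dist u x
  obtain ⟨q₂, -, hq₂⟩ := hT.connected.exists_path_of_dist x v
  have hq : (q₁.append q₂).IsPath := Walk.isPath_of_length_eq_dist _ <| by
    rw [Walk.length_append, hq₁, hq₂, h]
  rw [(hT.existsUnique_path u v).unique hp hq, Walk.mem_support_append_iff]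
  exact .inl q₁.end_mem_support

lemma IsTree.eq_of_between_of_dist_eq (hT : G.IsTree) (hx : G.Between u x v)
    (hy : G.Between u y v) (hd : G.dist u x = G.dist u y) : x = y := by
  classical
  obtain ⟨p, hp, -⟩ := hT.connected.exists_path_of_dist u v
  have hget : ∀ z, G.Between u z v → p.getVert (G.dist u z) = z := fun z hz => by
    have hzp := hT.mem_support_of_between hz hp
    rw [← hT.length_eq_dist (hp.takeUntil hzp), p.getVert_length_takeUntil hzp]
  rw [← hget x hx, ← hget y hy, hd]

noncomputable def stepToward (G : SimpleGraph V) (a b : V) : V :=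
  have : Nonempty V := ⟨a⟩
  Classical.epsilon fun x => G.Adj a x ∧ G.Between a x b

lemma Connected.exists_adj_between (hG : G.Connected) (h : a ≠ b) :
    ∃ x, G.Adj a x ∧ G.Between a x b := by
  obtain ⟨p, -, hp⟩ := hG.exists_path_of_dist a b
  cases p with
  | nil => exact absurd rfl h
  | @cons _ x _ hadj q =>
    refine ⟨x, hadj, ?_⟩
    have := dist_le q
    have := hG.dist_triangle (u := a) (v := x) (w := b)
    rw [Walk.length_cons] at hp
    unfold Between
    rw [dist_eq_one_iff_adj.mpr hadj] at *
    omega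

lemma Connected.adj_stepToward (hG : G.Connected) (h : a ≠ b) : G.Adj a (G.stepToward a b) :=
  (Classical.epsilon_spec (hG.exists_adj_between h)).1

lemma Connected.between_stepToward (hG : G.Connected) (h : a ≠ b) :
    G.Between a (G.stepToward a b) b :=
  (Classical.epsilon_spec (hG.exists_adj_between h)).2

lemma IsTree.stepToward_eq (hT : G.IsTree) (hx : G.Adj a x) (h : G.Between a x b) :
    G.stepToward a b = x := by
  have hab : a ≠ b := by rintro rfl; exact hx.not_between h
  have hs := hT.connected.adj_stepToward hab
  refine hT.eq_of_between_of_dist_eq (hT.connected.between_stepToward hab) h ?_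
  rw [dist_eq_one_iff_adj.mpr hs, dist_eq_one_iff_adj.mpr hx]

lemma IsTree.stepToward_eq_of_between (hT : G.IsTree) (h : G.Between a u y) (hu : a ≠ u) :
    G.stepToward a u = G.stepToward a y :=
  (hT.stepToward_eq (hT.connected.adj_stepToward hu)
    (h.trans_left hT.connected (hT.connected.between_stepToward hu))).symm

lemma Connected.stepToward_ne_of_between (hG : G.Connected) (h : G.Between y a z) (hy : y ≠ a)
    (hz : z ≠ a) : G.stepToward a y ≠ G.stepToward a z := by
  intro he
  have hy' := hG.between_stepToward hy.symm
  have hz' := hG.between_stepToward hz.symm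
  rw [he] at hy'
  have hw := dist_eq_one_iff_adj.mpr (hG.adj_stepToward hz.symm)
  have := hG.dist_triangle (u := y) (v := G.stepToward a z) (w := z)
  have := dist_comm (G := G) (u := y) (v := a)
  have := dist_comm (G := G) (u := y) (v := G.stepToward a z)
  unfold Between at *
  omega

lemma Walk.IsPath.append {p : G.Walk u a} {q : G.Walk a v} (hp : p.IsPath) (hq : q.IsPath)
    (h : ∀ x ∈ p.support, x ∈ q.support → x = a) : (p.append q).IsPath := by
  rw [Walk.isPath_def, Walk.support_append, List.nodup_append]
  have hq' := hq.support_nodup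
  rw [← Walk.cons_tail_support q, List.nodup_cons] at hq'
  refine ⟨hp.support_nodup, hq'.2, fun x hxp y hyq hxy => ?_⟩
  subst hxy
  obtain rfl := h x hxp (Walk.cons_tail_support q ▸ List.mem_cons_of_mem _ hyq)
  exact hq'.1 hyq

lemma IsTree.between_of_stepToward_ne (hT : G.IsTree)
    (h : G.stepToward a y ≠ G.stepToward a z) : G.Between y a z := by
  obtain ⟨p, hp, hpl⟩ := hT.connected.exists_path_of_dist y a
  obtain ⟨q, hq, hql⟩ := hT.connected.exists_path_of_dist a z
  have hpq : (p.append q).IsPath := hp.append hq fun x hxp hxq => by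
    by_contra hxa
    apply h
    rw [← hT.stepToward_eq_of_between (hT.between_of_mem_support hp hxp).symm (Ne.symm hxa),
      hT.stepToward_eq_of_between (hT.between_of_mem_support hq hxq) (Ne.symm hxa)]
  have := hT.length_eq_dist hpq
  rwa [Walk.length_append, hpl, hql] at this

lemma IsTree.exists_median (hT : G.IsTree) (x y z : V) :
    ∃ m, G.Between x m y ∧ G.Between x m z ∧ G.Between y m z := by
  induction hn : G.dist x y generalizing x with
  | zero =>
    obtain rfl := hT.connected.dist_eq_zero_iff.mp hn
    exact ⟨x, between_self_left G x x, between_self_left G x z, between_self_left G x z⟩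
  | succ n ih =>
    by_cases hb : G.Between y x z
    · exact ⟨x, between_self_right G y x |>.symm, between_self_left G x z, hb⟩
    have hxy : y ≠ x := by rintro rfl; exact hb (between_self_left G y z)
    have hxz : z ≠ x := by rintro rfl; exact hb (between_self_right G y z)
    have heq : G.stepToward x y = G.stepToward x z := by
      by_contra hne; exact hb (hT.between_of_stepToward_ne hne)
    have hy := hT.connected.between_stepToward hxy.symm
    have hz := hT.connected.between_stepToward hxz.symm
    rw [heq] at hy
    obtain ⟨m, hm₁, hm₂, hm₃⟩ := ih (G.stepToward x z) <| by
      have := dist_eq_one_iff_adj.mpr (hT.connected.adj_stepToward hxz.symm)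
      unfold Between at hy; omega
    exact ⟨m, hy.trans_right hT.connected hm₁, hz.trans_right hT.connected hm₂, hm₃⟩

lemma _root_.IsLeaf.not_isMajor (hl : IsLeaf G l) : ¬ IsMajor G l := by
  unfold IsLeaf at hl
  unfold IsMajor
  omega

lemma isMajor_of_adj [Finite V] (hx : G.Adj v x) (hy : G.Adj v y) (hz : G.Adj v z)
    (hxy : x ≠ y) (hxz : x ≠ z) (hyz : y ≠ z) : IsMajor G v := by
  have hsub : {x, y, z} ⊆ G.neighborSet v := by
    simp [Set.insert_subset_iff, hx, hy, hz]
  have := Set.ncard_le_ncard hsub (Set.toFinite _)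
  rwa [Set.ncard_eq_three.mpr ⟨x, y, z, hxy, hxz, hyz, rfl⟩] at this

lemma IsTree.not_between_of_isLeaf (hT : G.IsTree) (hl : IsLeaf G l) (ha : a ≠ l)
    (hb : b ≠ l) : ¬ G.Between a l b := by
  intro h
  obtain ⟨n, hn⟩ := Set.ncard_eq_one.mp hl
  have ha' : G.stepToward l a ∈ G.neighborSet l := hT.connected.adj_stepToward ha.symm
  have hb' : G.stepToward l b ∈ G.neighborSet l := hT.connected.adj_stepToward hb.symm
  rw [hn] at ha' hb'
  exact hT.connected.stepToward_ne_of_between h ha hb (ha'.trans hb'.symm)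

lemma IsTree.isMajor_of_between [Finite V] (hT : G.IsTree) (hxy : G.Between x m y)
    (hxz : G.Between x m z) (hyz : G.Between y m z) (hx : x ≠ m) (hy : y ≠ m) (hz : z ≠ m) :
    IsMajor G m :=
  isMajor_of_adj (hT.connected.adj_stepToward hx.symm) (hT.connected.adj_stepToward hy.symm)
    (hT.connected.adj_stepToward hz.symm) (hT.connected.stepToward_ne_of_between hxy hx hy)
    (hT.connected.stepToward_ne_of_between hxz hx hz)
    (hT.connected.stepToward_ne_of_between hyz hy hz)

lemma IsTree.exists_isLeaf_between [Finite V] (hT : G.IsTree) (h : a ≠ b) :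
    ∃ l, IsLeaf G l ∧ G.Between b a l := by
  obtain ⟨l, hl, hmax⟩ := Set.exists_max_image {x | G.Between b a x} (G.dist b)
    (Set.toFinite _) ⟨a, between_self_right G b a⟩
  have hlb : l ≠ b := by
    rintro rfl
    have hbab : G.dist l a + G.dist a l = G.dist l l := hl
    have := hT.connected.pos_dist_of_ne h
    rw [dist_self] at hbab
    omega
  refine ⟨l, ?_, hl⟩
  have hnbr : G.neighborSet l = {G.stepToward l b} := by
    refine Set.eq_singleton_iff_unique_mem.mpr ⟨hT.connected.adj_stepToward hlb, fun y hy => ?_⟩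
    by_contra hne
    have hbly : G.Between b l y := hT.between_of_stepToward_ne <| by
      rw [hT.stepToward_eq hy (between_self_right G l y)]
      exact Ne.symm hne
    have := hmax y (hbly.trans_left hT.connected hl)
    have := dist_eq_one_iff_adj.mpr hy
    unfold Between at hbly
    omega
  rw [IsLeaf, hnbr, Set.ncard_singleton]

lemma _root_.IsTerminalOf.unique {v' : V} (h : IsTerminalOf G l v) (h' : IsTerminalOf G l v') :
    v = v' := by
  by_contra hne
  have := h.2.2 v' h'.2.1 (Ne.symm hne)
  have := h'.2.2 v h.2.1 hne
  omega

lemma _root_.IsTerminalOf.ne (h : IsTerminalOf G l v) : l ≠ v := by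
  rintro rfl
  exact h.1.not_isMajor h.2.1

lemma _root_.IsTerminalOf.dist_le (h : IsTerminalOf G l v) (hw : IsMajor G w) :
    G.dist l v ≤ G.dist l w := by
  rcases eq_or_ne w v with rfl | hwv
  exacts [le_rfl, (h.2.2 w hw hwv).le]

lemma IsTree.between_or_between_of_forall_isMajor [Finite V] (hT : G.IsTree) (hl : IsLeaf G l)
    (hv : IsMajor G v) (h : ∀ m, IsMajor G m → G.Between l m v → m = v) (x : V) :
    G.Between l x v ∨ G.Between l v x := by
  obtain ⟨m, hlv, hlx, hvx⟩ := hT.exists_median l v x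
  by_cases hmv : m = v
  · exact .inr (hmv ▸ hlx)
  by_cases hmx : m = x
  · exact .inl (hmx ▸ hlv)
  by_cases hml : m = l
  · subst hml
    exact absurd hvx (hT.not_between_of_isLeaf hl (fun h => hl.not_isMajor (h ▸ hv)) (Ne.symm hmx))
  exact absurd (h m (hT.isMajor_of_between hlv hlx hvx (Ne.symm hml) (Ne.symm hmv) (Ne.symm hmx))
    hlv) hmv

lemma IsTree.between_or_between_of_isTerminalOf [Finite V] (hT : G.IsTree)
    (h : IsTerminalOf G l v) (x : V) : G.Between l x v ∨ G.Between l v x :=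
  hT.between_or_between_of_forall_isMajor h.1 h.2.1 (fun m hm hlm => by
    by_contra hmv
    have := h.2.2 m hm hmv
    unfold Between at hlm
    omega) x

lemma IsTree.exists_isMajor (hT : G.IsTree) (hnp : ¬ IsPathGraph G) : ∃ v, IsMajor G v := by
  by_contra! h
  exact hnp ⟨hT, fun v => by have := h v; unfold IsMajor at this; omega⟩

lemma IsTree.exists_isTerminalOf [Finite V] (hT : G.IsTree) (hnp : ¬ IsPathGraph G)
    (hl : IsLeaf G l) : ∃ v, IsTerminalOf G l v := by
  obtain ⟨v, hv, hmin⟩ := Set.exists_min_image {v | IsMajor G v} (G.dist l) (Set.toFinite _)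
    (hT.exists_isMajor hnp)
  have hinner : ∀ m, IsMajor G m → G.Between l m v → m = v := fun m hm hlm => by
    by_contra hmv
    have := hmin m hm
    have := hT.connected.pos_dist_of_ne hmv
    unfold Between at hlm
    omega
  refine ⟨v, hl, hv, fun w hw hwv => ?_⟩
  rcases hT.between_or_between_of_forall_isMajor hl hv hinner w with h | h
  · exact absurd (hinner w hw h) hwv
  · have := hT.connected.pos_dist_of_ne hwv.symm
    unfold Between at h
    omega

lemma IsTree.exists_isTerminalOf_between [Finite V] (hT : G.IsTree) (hv : IsMajor G v)
    (hy : G.Adj v y) (h : ∀ w, IsMajor G w → ¬ G.Between v y w) :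
    ∃ l, IsTerminalOf G l v ∧ G.Between v y l := by
  obtain ⟨l, hl, hvl⟩ := hT.exists_isLeaf_between (G.ne_of_adj hy).symm
  refine ⟨l, ⟨hl, hv, fun w hw hwv => ?_⟩, hvl⟩
  have hlvw : G.Between l v w := hT.between_of_stepToward_ne <| by
    rw [hT.stepToward_eq hy hvl]
    exact fun hyw => h w hw (hyw ▸ hT.connected.between_stepToward hwv.symm)
  have := hT.connected.pos_dist_of_ne hwv.symm
  unfold Between at hlvw
  omega

lemma IsTree.exists_isTerminalOf_pair_beyond [Finite V] (hT : G.IsTree) (hv : IsMajor G v)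
    (hvc : v ≠ c) (hmax : ∀ w, IsMajor G w → G.Between c v w → w = v) :
    ∃ l₁ l₂, IsTerminalOf G l₁ v ∧ IsTerminalOf G l₂ v ∧ l₁ ≠ l₂ ∧
      G.Between c v l₁ ∧ G.Between c v l₂ := by
  have hcard : 1 < (G.neighborSet v \ {G.stepToward v c}).ncard := by
    have := Set.ncard_sdiff_singleton_add_one
      (show G.stepToward v c ∈ G.neighborSet v from hT.connected.adj_stepToward hvc) (Set.toFinite _)
    have : 3 ≤ (G.neighborSet v).ncard := hv
    omega
  obtain ⟨y₁, y₂, ⟨hy₁, hy₁c⟩, ⟨hy₂, hy₂c⟩, hy⟩ := (Set.one_lt_ncard_iff (Set.toFinite _)).mp hcard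
  have hbeyond : ∀ y ∈ G.neighborSet v, y ∉ ({G.stepToward v c} : Set V) →
      ∀ x, G.Between v y x → G.Between c v x := fun y hy hyc x hvx =>
    hT.between_of_stepToward_ne <| by
      rw [hT.stepToward_eq hy hvx]
      exact Ne.symm hyc
  have hterm : ∀ y ∈ G.neighborSet v, y ∉ ({G.stepToward v c} : Set V) →
      ∃ l, IsTerminalOf G l v ∧ G.Between v y l := fun y hy hyc =>
    hT.exists_isTerminalOf_between hv hy fun w hw hvw =>
      hy.not_between (hmax w hw (hbeyond y hy hyc w hvw) ▸ hvw)
  obtain ⟨l₁, h₁, hvl₁⟩ := hterm y₁ hy₁ hy₁c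
  obtain ⟨l₂, h₂, hvl₂⟩ := hterm y₂ hy₂ hy₂c
  refine ⟨l₁, l₂, h₁, h₂, ?_, hbeyond y₁ hy₁ hy₁c l₁ hvl₁, hbeyond y₂ hy₂ hy₂c l₂ hvl₂⟩
  rintro rfl
  exact hy ((hT.stepToward_eq hy₁ hvl₁).symm.trans (hT.stepToward_eq hy₂ hvl₂))

lemma IsTree.exists_isTerminalOf_pair_of_between [Finite V] (hT : G.IsTree) (hα : G.Adj c α)
    (hw : IsMajor G w) (hcw : G.Between c α w) :
    ∃ v l₁ l₂, IsTerminalOf G l₁ v ∧ IsTerminalOf G l₂ v ∧ l₁ ≠ l₂ ∧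
      G.Between c α l₁ ∧ G.Between c α l₂ := by
  obtain ⟨v, ⟨hv, hcv⟩, hmax⟩ := Set.exists_max_image {w | IsMajor G w ∧ G.Between c α w}
    (G.dist c) (Set.toFinite _) ⟨w, hw, hcw⟩
  have hvc : v ≠ c := by rintro rfl; exact hα.not_between hcv
  obtain ⟨l₁, l₂, h₁, h₂, hne, hcl₁, hcl₂⟩ := hT.exists_isTerminalOf_pair_beyond hv hvc
    fun w hw hcvw => by
      have := hmax w ⟨hw, hcvw.trans_left hT.connected hcv⟩
      by_contra hwv
      have := hT.connected.pos_dist_of_ne (Ne.symm hwv)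
      unfold Between at hcvw
      omega
  exact ⟨v, l₁, l₂, h₁, h₂, hne, hcl₁.trans_left hT.connected hcv,
    hcl₂.trans_left hT.connected hcv⟩

lemma IsTree.exists_isTerminalOf_pair [Finite V] (hT : G.IsTree) (hnp : ¬ IsPathGraph G)
    (hα : G.Adj c α) (hβ : G.Adj c β) (hαβ : α ≠ β) :
    ∃ v l₁ l₂, IsTerminalOf G l₁ v ∧ IsTerminalOf G l₂ v ∧ l₁ ≠ l₂ ∧
      (G.Between c α l₁ ∨ G.Between c β l₁) ∧ (G.Between c α l₂ ∨ G.Between c β l₂) := by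
  by_cases hmα : ∃ w, IsMajor G w ∧ G.Between c α w
  · obtain ⟨w, hw, hcw⟩ := hmα
    obtain ⟨v, l₁, l₂, h₁, h₂, hne, hcl₁, hcl₂⟩ := hT.exists_isTerminalOf_pair_of_between hα hw hcw
    exact ⟨v, l₁, l₂, h₁, h₂, hne, .inl hcl₁, .inl hcl₂⟩
  by_cases hmβ : ∃ w, IsMajor G w ∧ G.Between c β w
  · obtain ⟨w, hw, hcw⟩ := hmβ
    obtain ⟨v, l₁, l₂, h₁, h₂, hne, hcl₁, hcl₂⟩ := hT.exists_isTerminalOf_pair_of_between hβ hw hcw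
    exact ⟨v, l₁, l₂, h₁, h₂, hne, .inr hcl₁, .inr hcl₂⟩
  push Not at hmα hmβ
  by_cases hc : IsMajor G c
  · obtain ⟨l₁, h₁, hcl₁⟩ := hT.exists_isTerminalOf_between hc hα hmα
    obtain ⟨l₂, h₂, hcl₂⟩ := hT.exists_isTerminalOf_between hc hβ hmβ
    refine ⟨c, l₁, l₂, h₁, h₂, ?_, .inl hcl₁, .inr hcl₂⟩
    rintro rfl
    exact hαβ ((hT.stepToward_eq hα hcl₁).symm.trans (hT.stepToward_eq hβ hcl₂))
  -- every vertex lies in one of the two branches at `c`, or `c` would be major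
  refine absurd ⟨hT, fun w => ?_⟩ hnp
  by_contra! hw
  have hw : IsMajor G w := hw
  have hwc : w ≠ c := by rintro rfl; exact hc hw
  have hcw := hT.connected.between_stepToward hwc.symm
  refine hc (isMajor_of_adj hα hβ (hT.connected.adj_stepToward hwc.symm) hαβ ?_ ?_)
  · rintro h; exact hmα w hw (h ▸ hcw)
  · rintro h; exact hmβ w hw (h ▸ hcw)

noncomputable def pickTerminal (G : SimpleGraph V) (v : V) : V :=
  have : Nonempty V := ⟨v⟩
  Classical.epsilon (IsTerminalOf G · v)

def leavesExceptOneTerminal (G : SimpleGraph V) : Set V :=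
  {u | IsLeaf G u} \ pickTerminal G '' {v | IsExteriorMajor G v}

lemma isTerminalOf_pickTerminal (hv : IsExteriorMajor G v) :
    IsTerminalOf G (pickTerminal G v) v :=
  Classical.epsilon_spec (Set.nonempty_of_ncard_ne_zero hv.2.ne')

lemma eq_pickTerminal_of_notMem (h : IsTerminalOf G l v) (hl : l ∉ leavesExceptOneTerminal G) :
    l = pickTerminal G v := by
  obtain ⟨w, hw, rfl⟩ : l ∈ pickTerminal G '' {v | IsExteriorMajor G v} := by
    by_contra h'
    exact hl ⟨h.1, h'⟩
  rw [(isTerminalOf_pickTerminal hw).unique h]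

lemma mem_leavesExceptOneTerminal_or (h₁ : IsTerminalOf G l₁ v) (h₂ : IsTerminalOf G l₂ v)
    (hne : l₁ ≠ l₂) : l₁ ∈ leavesExceptOneTerminal G ∨ l₂ ∈ leavesExceptOneTerminal G := by
  by_contra! h
  exact hne ((eq_pickTerminal_of_notMem h₁ h.1).trans (eq_pickTerminal_of_notMem h₂ h.2).symm)

lemma ncard_leavesExceptOneTerminal [Finite V] :
    (leavesExceptOneTerminal G).ncard = numLeaves G - numExteriorMajor G := by
  have hinj : Set.InjOn (pickTerminal G) {v | IsExteriorMajor G v} := fun v hv w hw h =>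
    (isTerminalOf_pickTerminal hv).unique (h ▸ isTerminalOf_pickTerminal hw)
  have hsub : pickTerminal G '' {v | IsExteriorMajor G v} ⊆ {u | IsLeaf G u} := by
    rintro _ ⟨v, hv, rfl⟩
    exact (isTerminalOf_pickTerminal hv).1
  rw [leavesExceptOneTerminal, Set.ncard_sdiff hsub, hinj.ncard_image, numLeaves,
    numExteriorMajor]

lemma IsTree.nonempty_leavesExceptOneTerminal [Finite V] (hT : G.IsTree)
    (hnp : ¬ IsPathGraph G) : (leavesExceptOneTerminal G).Nonempty := by
  obtain ⟨c, hc⟩ := hT.exists_isMajor hnp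
  obtain ⟨α, β, hα, hβ, hαβ⟩ := (Set.one_lt_ncard_iff (Set.toFinite (G.neighborSet c))).mp
    (by unfold IsMajor at hc; omega)
  obtain ⟨v, l₁, l₂, h₁, h₂, hne, -, -⟩ := hT.exists_isTerminalOf_pair hnp hα hβ hαβ
  rcases mem_leavesExceptOneTerminal_or h₁ h₂ hne with h | h
  exacts [⟨l₁, h⟩, ⟨l₂, h⟩]

lemma IsTree.between_of_dist_eq (hT : G.IsTree) (hacb : G.Between a c b)
    (hc : G.dist a c = G.dist b c) (hs : G.dist a s = G.dist b s) : G.Between a c s := by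
  obtain ⟨m, hsa, hsb, hamb⟩ := hT.exists_median s a b
  have hmc : m = c := hT.eq_of_between_of_dist_eq hamb hacb <| by
    have := dist_comm (G := G) (u := a) (v := s)
    have := dist_comm (G := G) (u := b) (v := s)
    have := dist_comm (G := G) (u := a) (v := m)
    have := dist_comm (G := G) (u := b) (v := m)
    have := dist_comm (G := G) (u := b) (v := c)
    unfold Between at *
    omega
  exact hmc ▸ hsa.symm

lemma IsTree.not_between_stepToward (hT : G.IsTree) (h : G.Between a c s) (ha : a ≠ c) :
    ¬ G.Between c (G.stepToward c a) s := by
  intro hcs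
  have hadj := hT.connected.adj_stepToward ha.symm
  have hsc : s ≠ c := by rintro rfl; exact hadj.not_between hcs
  exact hT.connected.stepToward_ne_of_between h ha hsc (hT.stepToward_eq hadj hcs).symm

theorem IsTree.isResolvingSet_leavesExceptOneTerminal [Finite V] (hT : G.IsTree)
    (hnp : ¬ IsPathGraph G) : IsResolvingSet G (leavesExceptOneTerminal G) := by
  intro a b hab
  by_contra hne
  obtain ⟨s₀, hs₀⟩ := hT.nonempty_leavesExceptOneTerminal hnp
  obtain ⟨c, hs₀a, hs₀b, hacb⟩ := hT.exists_median s₀ a b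
  have hc : G.dist a c = G.dist b c := by
    have := hab s₀ hs₀
    have := dist_comm (G := G) (u := a) (v := s₀)
    have := dist_comm (G := G) (u := b) (v := s₀)
    have := dist_comm (G := G) (u := a) (v := c)
    have := dist_comm (G := G) (u := b) (v := c)
    unfold Between at hs₀a hs₀b
    omega
  have hac : a ≠ c := by
    rintro rfl
    exact hne (hT.connected.dist_eq_zero_iff.mp (by rw [← hc, dist_self])).symm
  have hbc : b ≠ c := by
    rintro rfl
    exact hne (hT.connected.dist_eq_zero_iff.mp (by rw [hc, dist_self]))
  have hbehind : ∀ l ∈ leavesExceptOneTerminal G,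
      ¬ G.Between c (G.stepToward c a) l ∧ ¬ G.Between c (G.stepToward c b) l := fun l hl =>
    ⟨hT.not_between_stepToward (hT.between_of_dist_eq hacb hc (hab l hl)) hac,
      hT.not_between_stepToward (hT.between_of_dist_eq hacb.symm hc.symm (hab l hl).symm) hbc⟩
  obtain ⟨v, l₁, l₂, h₁, h₂, hl, hcl₁, hcl₂⟩ := hT.exists_isTerminalOf_pair hnp
    (hT.connected.adj_stepToward hac.symm) (hT.connected.adj_stepToward hbc.symm)
    (hT.connected.stepToward_ne_of_between hacb hac hbc)
  rcases mem_leavesExceptOneTerminal_or h₁ h₂ hl with h | h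
  · exact hcl₁.elim (hbehind l₁ h).1 (hbehind l₁ h).2
  · exact hcl₂.elim (hbehind l₂ h).1 (hbehind l₂ h).2

noncomputable def anchor (G : SimpleGraph V) (l : V) : V :=
  have : Nonempty V := ⟨l⟩
  Classical.epsilon (IsTerminalOf G l)

def leg (G : SimpleGraph V) (l : V) : Set V :=
  {x | G.Between l x (anchor G l) ∧ x ≠ anchor G l}

lemma IsTree.isTerminalOf_anchor [Finite V] (hT : G.IsTree) (hnp : ¬ IsPathGraph G)
    (hl : IsLeaf G l) : IsTerminalOf G l (anchor G l) :=
  Classical.epsilon_spec (hT.exists_isTerminalOf hnp hl)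

lemma IsTree.isExteriorMajor_anchor [Finite V] (hT : G.IsTree) (hnp : ¬ IsPathGraph G)
    (hl : IsLeaf G l) : IsExteriorMajor G (anchor G l) := by
  have h := hT.isTerminalOf_anchor hnp hl
  exact ⟨h.2.1, (Set.ncard_pos (Set.toFinite _)).mpr ⟨l, h⟩⟩

lemma IsTree.between_anchor [Finite V] (hT : G.IsTree) (hnp : ¬ IsPathGraph G)
    (hl : IsLeaf G l) (hl' : IsLeaf G l') (hne : l ≠ l') : G.Between l (anchor G l) l' := by
  have h := hT.isTerminalOf_anchor hnp hl
  refine (hT.between_or_between_of_isTerminalOf h l').resolve_left ?_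
  exact hT.not_between_of_isLeaf hl' hne (fun h' => hl'.not_isMajor (h' ▸ h.2.1))

lemma IsTree.disjoint_leg [Finite V] (hT : G.IsTree) (hnp : ¬ IsPathGraph G)
    (hl : IsLeaf G l) (hl' : IsLeaf G l') (hne : l ≠ l') : Disjoint (leg G l) (leg G l') := by
  rw [Set.disjoint_left]
  rintro x ⟨hlx, hxv⟩ ⟨hl'x, -⟩
  have hxl' := (hT.between_anchor hnp hl hl' hne).trans_left_right hT.connected hlx
  have hle := (hT.isTerminalOf_anchor hnp hl').dist_le (hT.isTerminalOf_anchor hnp hl).2.1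
  have := hT.connected.pos_dist_of_ne hxv
  have := dist_comm (G := G) (u := x) (v := l')
  have := dist_comm (G := G) (u := anchor G l) (v := l')
  unfold Between at hxl' hl'x
  omega

lemma IsTree.between_anchor_of_notMem_leg [Finite V] (hT : G.IsTree) (hnp : ¬ IsPathGraph G)
    (hl : IsLeaf G l) (hx : x ∈ leg G l) (hw : w ∉ leg G l) : G.Between x (anchor G l) w := by
  rcases hT.between_or_between_of_isTerminalOf (hT.isTerminalOf_anchor hnp hl) w with h | h
  · obtain rfl : w = anchor G l := by
      by_contra hwv
      exact hw ⟨h, hwv⟩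
    exact between_self_right G x _
  · exact h.trans_left_right hT.connected hx.1

lemma IsTree.stepToward_anchor_mem_leg [Finite V] (hT : G.IsTree) (hnp : ¬ IsPathGraph G)
    (hl : IsLeaf G l) : G.stepToward (anchor G l) l ∈ leg G l := by
  have hlv := (hT.isTerminalOf_anchor hnp hl).ne
  exact ⟨(hT.connected.between_stepToward hlv.symm).symm,
    (G.ne_of_adj (hT.connected.adj_stepToward hlv.symm)).symm⟩

lemma IsTree.dist_stepToward_anchor [Finite V] (hT : G.IsTree) (hnp : ¬ IsPathGraph G)
    (hl : IsLeaf G l) (hw : w ∉ leg G l) :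
    G.dist (G.stepToward (anchor G l) l) w = G.dist (anchor G l) w + 1 := by
  have hlv := (hT.isTerminalOf_anchor hnp hl).ne
  have h := hT.between_anchor_of_notMem_leg hnp hl (hT.stepToward_anchor_mem_leg hnp hl) hw
  rw [← h, dist_eq_one_iff_adj.mpr (hT.connected.adj_stepToward hlv.symm).symm]
  omega

lemma IsTree.inter_leg_nonempty_of_anchor_eq [Finite V] (hT : G.IsTree)
    (hnp : ¬ IsPathGraph G) {W : Set V} (hW : IsResolvingSet G W) (hl : IsLeaf G l)
    (hl' : IsLeaf G l') (hne : l ≠ l') (ha : anchor G l = anchor G l') :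
    (W ∩ leg G l).Nonempty ∨ (W ∩ leg G l').Nonempty := by
  by_contra! h
  have heq : G.stepToward (anchor G l) l = G.stepToward (anchor G l') l' := hW _ _ fun w hw => by
    rw [hT.dist_stepToward_anchor hnp hl (fun hw' => h.1.subset ⟨hw, hw'⟩),
      hT.dist_stepToward_anchor hnp hl' (fun hw' => h.2.subset ⟨hw, hw'⟩), ha]
  exact Set.disjoint_left.mp (hT.disjoint_leg hnp hl hl' hne)
    (hT.stepToward_anchor_mem_leg hnp hl) (heq ▸ hT.stepToward_anchor_mem_leg hnp hl')

lemma IsTree.numLeaves_le [Finite V] (hT : G.IsTree) (hnp : ¬ IsPathGraph G) {W : Set V}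
    (hW : IsResolvingSet G W) : numLeaves G ≤ W.ncard + numExteriorMajor G := by
  set hit := {l | IsLeaf G l ∧ (W ∩ leg G l).Nonempty}
  set miss := {l | IsLeaf G l ∧ ¬ (W ∩ leg G l).Nonempty}
  have hhit : hit.ncard ≤ W.ncard := by
    choose! f hf using fun l (hl : l ∈ hit) => hl.2
    refine Set.ncard_le_ncard_of_injOn f (fun l hl => (hf l hl).1) (fun l hl l' hl' h => ?_)
    by_contra hne
    exact Set.disjoint_left.mp (hT.disjoint_leg hnp hl.1 hl'.1 hne) (hf l hl).2 (h ▸ (hf l' hl').2)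
  have hmiss : miss.ncard ≤ numExteriorMajor G := by
    refine Set.ncard_le_ncard_of_injOn (anchor G) (fun l hl => hT.isExteriorMajor_anchor hnp hl.1)
      (fun l hl l' hl' h => ?_)
    by_contra hne
    exact (hT.inter_leg_nonempty_of_anchor_eq hnp hW hl.1 hl'.1 hne h).elim hl.2 hl'.2
  calc numLeaves G ≤ (hit ∪ miss).ncard :=
        Set.ncard_le_ncard fun l hl => (em _).elim (.inl ⟨hl, ·⟩) (.inr ⟨hl, ·⟩)
    _ ≤ hit.ncard + miss.ncard := Set.ncard_union_le _ _
    _ ≤ W.ncard + numExteriorMajor G := add_le_add hhit hmiss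

end SimpleGraph

/-- For a tree that is not a path, `dim(T) = n₁(T) - ex(T)`. -/
theorem metricDim_tree_eq {V : Type*} [Fintype V] (G : SimpleGraph V)
    (hT : G.IsTree) (hnp : ¬ IsPathGraph G) :
    metricDim G = numLeaves G - numExteriorMajor G := by
  have hmem : numLeaves G - numExteriorMajor G ∈
      {k | ∃ S : Set V, S.ncard = k ∧ IsResolvingSet G S} :=
    ⟨_, ncard_leavesExceptOneTerminal, hT.isResolvingSet_leavesExceptOneTerminal hnp⟩
  refine le_antisymm (Nat.sInf_le hmem) (le_csInf ⟨_, hmem⟩ ?_)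
  rintro _ ⟨W, rfl, hW⟩
  have := hT.numLeaves_le hnp hW
  omega
end

section
/- For any finite tree T of order n ≥ 2, the partition dimension of T is at most the number of leaves of T, i.e., pd(T) ≤ n₁(T). -/
open SimpleGraph

variable {V : Type*}

section Aux
open SimpleGraph Walk

variable {V : Type*} {G : SimpleGraph V}

/-- In a tree, every path realizes the distance. -/
private lemma tree_path_length_eq_dist (hT : G.IsTree) {u v : V}
    (p : G.Walk u v) (hp : p.IsPath) : p.length = G.dist u v := by
  classical
  obtain ⟨q, hq⟩ := hT.isConnected.exists_walk_length_eq_dist u v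
  have h1 : G.dist u v ≤ p.length := SimpleGraph.dist_le p
  have heq : p = q.bypass := (hT.existsUnique_path u v).unique hp q.bypass_isPath
  have h2 : p.length ≤ q.length := heq ▸ q.length_bypass_le
  omega

/-- If a path from `u` to `x` passes through an interior vertex `w ≠ x`,
then its length is at least `dist u w + 1`. -/
private lemma dist_add_one_le_length (hT : G.IsTree) {u w x : V} {Q : G.Walk u x}
    (hQ : Q.IsPath) (hw : w ∈ Q.support) (hwx : w ≠ x) :
    G.dist u w + 1 ≤ Q.length := by
  classical
  have ht : (Q.takeUntil w hw).IsPath := hQ.takeUntil hw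
  have hlen : (Q.takeUntil w hw).length + (Q.dropUntil w hw).length = Q.length := by
    rw [← Walk.length_append, Walk.take_spec]
  have h1 : (Q.takeUntil w hw).length = G.dist u w := tree_path_length_eq_dist hT _ ht
  have h2 : (Q.dropUntil w hw).length ≠ 0 := fun h => hwx (Walk.eq_of_length_eq_zero h)
  omega

private lemma exists_neighbor_far (hT : G.IsTree) {u w : V} (hu : u ≠ w)
    {x₁ x₂ : V} (h1 : G.Adj w x₁) (h2 : G.Adj w x₂) (hne : x₁ ≠ x₂) :
    ∃ x, G.Adj w x ∧ G.dist u x = G.dist u w + 1 := by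
  classical
  by_contra hcon
  push_neg at hcon
  have hconn := hT.isConnected
  have key : ∀ x (h : G.Adj w x), ∃ Q : G.Walk u x, Q.IsPath ∧ Q.length = G.dist u x ∧
      w ∉ Q.support := by
    intro x h
    have hle : G.dist u x ≤ G.dist u w + 1 := by
      have := hconn.dist_triangle (u := u) (v := w) (w := x)
      have := SimpleGraph.dist_le h.toWalk
      simp only [Adj.toWalk, Walk.length_cons, Walk.length_nil] at this
      omega
    have hlt : G.dist u x ≤ G.dist u w := by
      have := hcon x h
      omega
    obtain ⟨Q, hQ, -⟩ := hT.existsUnique_path u x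
    have hQlen : Q.length = G.dist u x := tree_path_length_eq_dist hT Q hQ
    refine ⟨Q, hQ, hQlen, fun hw => ?_⟩
    have := dist_add_one_le_length hT hQ hw (h.ne)
    omega
  obtain ⟨Q₁, hQ₁, hl₁, hw₁⟩ := key x₁ h1
  obtain ⟨Q₂, hQ₂, hl₂, hw₂⟩ := key x₂ h2
  have hp1 : (Q₁.concat h1.symm).IsPath := by
    rw [← Walk.isPath_reverse_iff, Walk.reverse_concat, Walk.cons_isPath_iff]
    exact ⟨hQ₁.reverse, by simpa using hw₁⟩
  have hp2 : (Q₂.concat h2.symm).IsPath := by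
    rw [← Walk.isPath_reverse_iff, Walk.reverse_concat, Walk.cons_isPath_iff]
    exact ⟨hQ₂.reverse, by simpa using hw₂⟩
  have hPeq : Q₁.concat h1.symm = Q₂.concat h2.symm :=
    (hT.existsUnique_path u w).unique hp1 hp2
  have hgetVert : ∀ (x : V) (h : G.Adj x w) (Q : G.Walk u x),
      (Q.concat h).getVert Q.length = x := by
    intro x h Q
    rw [Walk.concat_eq_append, Walk.getVert_append]
    simp [Walk.getVert_zero]
  have hlen12 : Q₁.length = Q₂.length := by
    have := congrArg Walk.length hPeq
    simpa [Walk.length_concat] using this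
  have : x₁ = x₂ := by
    have e1 := hgetVert x₁ h1.symm Q₁
    have e2 := hgetVert x₂ h2.symm Q₂
    rw [hPeq, hlen12] at e1
    rw [e1] at e2
    exact e2.symm ▸ e2
  exact hne this

private lemma exists_leaf_beyond [Fintype V] (hT : G.IsTree) (hV : 2 ≤ Fintype.card V)
    {u v : V} (huv : u ≠ v) :
    ∃ l, IsLeaf G l ∧ G.dist u l = G.dist u v + G.dist v l := by
  classical
  have hconn := hT.isConnected
  set S := Finset.univ.filter (fun w => G.dist u w = G.dist u v + G.dist v w) with hS
  have hvS : v ∈ S := by simp [hS]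
  obtain ⟨m, hmS, hmax⟩ := S.exists_max_image (fun w => G.dist u w) ⟨v, hvS⟩
  have hm : G.dist u m = G.dist u v + G.dist v m := by simpa [hS] using hmS
  refine ⟨m, ?_, hm⟩
  have hmu : m ≠ u := by
    intro h
    rw [h] at hm
    have h0 : G.dist u u = 0 := hconn.dist_eq_zero_iff.mpr rfl
    have hcm : G.dist v u = G.dist u v := SimpleGraph.dist_comm
    exact huv (hconn.dist_eq_zero_iff.mp (by omega))
  have hnb : (G.neighborSet m).Nonempty := by
    obtain ⟨p⟩ := hconn m u
    cases p with
    | nil => exact absurd rfl hmu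
    | cons h q => exact ⟨_, h⟩
  by_contra hleaf
  have hpos : 0 < (G.neighborSet m).ncard := (Set.ncard_pos (Set.toFinite _)).mpr hnb
  have h2 : 1 < (G.neighborSet m).ncard := by
    rcases Nat.lt_or_ge 1 ((G.neighborSet m).ncard) with h | h
    · exact h
    · exact absurd (by omega : (G.neighborSet m).ncard = 1) hleaf
  obtain ⟨x₁, x₂, hx₁, hx₂, hne⟩ := (Set.one_lt_ncard_iff (Set.toFinite _)).mp h2
  have hx₁' : G.Adj m x₁ := hx₁
  have hx₂' : G.Adj m x₂ := hx₂
  obtain ⟨x, hadj, hdx⟩ := exists_neighbor_far hT hmu.symm hx₁' hx₂' hne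
  have hxS : x ∈ S := by
    have t1 : G.dist u x ≤ G.dist u v + G.dist v x := hconn.dist_triangle
    have t2 : G.dist v x ≤ G.dist v m + 1 := by
      have := hconn.dist_triangle (u := v) (v := m) (w := x)
      have := SimpleGraph.dist_le hadj.toWalk
      simp only [Adj.toWalk, Walk.length_cons, Walk.length_nil] at this
      omega
    simp only [hS, Finset.mem_filter, Finset.mem_univ, true_and]
    omega
  have := hmax x hxS
  omega

end Aux

/-- For any tree of order at least two, `pd(T) ≤ n₁(T)`. -/
theorem partitionDim_le_numLeaves {V : Type*} [Fintype V] (G : SimpleGraph V)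
    (hT : G.IsTree) (hV : 2 ≤ Fintype.card V) :
    partitionDim G ≤ numLeaves G := by
  classical
  have hconn := hT.isConnected
  have sep : ∀ u v : V, u ≠ v → ∃ l₁ l₂ : V, IsLeaf G l₁ ∧ IsLeaf G l₂ ∧ l₁ ≠ l₂ ∧
      G.dist u l₁ ≠ G.dist v l₁ ∧ G.dist u l₂ ≠ G.dist v l₂ := by
    intro u v huv
    obtain ⟨l₁, hl₁, hd₁⟩ := exists_leaf_beyond hT hV huv
    obtain ⟨l₂, hl₂, hd₂⟩ := exists_leaf_beyond hT hV huv.symm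
    have hpos : G.dist u v ≠ 0 := fun h => huv (hconn.dist_eq_zero_iff.mp h)
    have hcomm : G.dist v u = G.dist u v := SimpleGraph.dist_comm
    refine ⟨l₁, l₂, hl₁, hl₂, ?_, by omega, by omega⟩
    rintro rfl
    omega
  set k := Fintype.card {v : V // IsLeaf G v} with hkdef
  have hcard : k = numLeaves G := by
    rw [hkdef, ← Nat.card_eq_fintype_card, numLeaves]
    exact Nat.card_coe_set_eq _
  let e : {v : V // IsLeaf G v} ≃ Fin k := Fintype.equivFin _
  have hk1 : 0 < k := by
    obtain ⟨a, b, hab⟩ := Fintype.exists_pair_of_one_lt_card (by omega : 1 < Fintype.card V)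
    obtain ⟨l, hl, -⟩ := exists_leaf_beyond hT hV hab
    exact Fintype.card_pos_iff.mpr ⟨⟨l, hl⟩⟩
  let last : Fin k := ⟨k - 1, by omega⟩
  let c : V → Fin k := fun v => if h : IsLeaf G v then e ⟨v, h⟩ else last
  have hsurj : Function.Surjective c := by
    intro i
    refine ⟨(e.symm i).1, ?_⟩
    have h := (e.symm i).2
    have hc : c (e.symm i).1 = e ⟨(e.symm i).1, h⟩ := dif_pos h
    rw [hc, Subtype.coe_eta, e.apply_symm_apply]
  have hclass : ∀ (l : V) (h : IsLeaf G l), e ⟨l, h⟩ ≠ last →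
      {x | c x = e ⟨l, h⟩} = {l} := by
    intro l h hne
    ext x
    simp only [Set.mem_setOf_eq, Set.mem_singleton_iff, c]
    constructor
    · intro hx
      split_ifs at hx with hx'
      · exact congrArg Subtype.val (e.injective hx)
      · exact absurd hx.symm hne
    · rintro rfl
      exact dif_pos h
  have hdistset : ∀ (v l : V), distSet G v {l} = G.dist v l := by
    intro v l
    simp only [distSet, Set.image_singleton, csInf_singleton]
  have hres : IsResolvingPartition G c := by
    refine ⟨hsurj, fun u v h => ?_⟩
    by_contra huv
    obtain ⟨l₁, l₂, hl₁, hl₂, hne, hd₁, hd₂⟩ := sep u v huv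
    have hne' : e ⟨l₁, hl₁⟩ ≠ e ⟨l₂, hl₂⟩ :=
      fun h => hne (congrArg Subtype.val (e.injective h))
    rcases ne_or_eq (e ⟨l₁, hl₁⟩) last with hi | hi
    · have hh := h (e ⟨l₁, hl₁⟩)
      rw [hclass l₁ hl₁ hi, hdistset, hdistset] at hh
      exact hd₁ hh
    · have hi2 : e ⟨l₂, hl₂⟩ ≠ last := by rw [← hi]; exact hne'.symm
      have hh := h (e ⟨l₂, hl₂⟩)
      rw [hclass l₂ hl₂ hi2, hdistset, hdistset] at hh
      exact hd₂ hh
  rw [← hcard]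
  exact Nat.sInf_le ⟨c, hres⟩
end
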